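/- For w = 2^c and any shift i ∈ {0,...,w-1}, every axis-parallel integer rectangle in [0,w]×[0,w] containing no point of the shifted Van der Corput set C_w^i = {(q, (f_w(q)+i) mod w) : 0 ≤ q ≤ w-1} has area strictly less than 4w. -/

import Mathlib

/-- Bit-reversing function. -/
def bitRev (c z : ℕ) : ℕ := ∑ i ∈ Finset.range c, (z / 2 ^ i % 2) * 2 ^ (c - 1 - i)

/-!
Choose `j` with `2 ^ (j + 1) ≤ β - α < 2 ^ (j + 2)` and put `k = c - j`. The columns of the
rectangle then contain a whole dyadic block `m * 2 ^ j + u`, `u < 2 ^ j`, and bit reversal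
sends it to `bitRev k m + 2 ^ k * bitRev j u`. As `bitRev j` permutes `[0, 2 ^ j)`, the shifted
heights of this block form the full residue class of `bitRev k m + i` modulo `2 ^ k` in
`[0, 2 ^ c)`. An empty rectangle therefore has height below `2 ^ k`, and its area is below
`2 ^ (j + 2) * 2 ^ k = 4 * 2 ^ c`.
-/

@[simp]
lemma bitRev_zero_left (z : ℕ) : bitRev 0 z = 0 := rfl

lemma bitRev_succ (c z : ℕ) : bitRev (c + 1) z = z % 2 * 2 ^ c + bitRev c (z / 2) := by
  rw [bitRev, bitRev, Finset.sum_range_succ', add_comm]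
  simp [Nat.div_div_eq_div_mul, ← pow_succ', Nat.sub_sub, Nat.add_comm 1]

lemma bitRev_one (z : ℕ) : bitRev 1 z = z % 2 := by
  simp [bitRev_succ]

lemma bitRev_lt (c z : ℕ) : bitRev c z < 2 ^ c := by
  induction c generalizing z with
  | zero => simp
  | succ c ih =>
    have hbit : z % 2 * 2 ^ c ≤ 2 ^ c :=
      mul_le_of_le_one_left (Nat.zero_le _) (Nat.le_of_lt_succ (Nat.mod_lt z two_pos))
    rw [bitRev_succ, pow_succ]
    linarith [ih (z / 2)]

lemma bitRev_add_mul_pow {k j u : ℕ} (m : ℕ) (hu : u < 2 ^ j) :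
    bitRev (k + j) (m * 2 ^ j + u) = bitRev k m + 2 ^ k * bitRev j u := by
  induction j generalizing u with
  | zero => simp_all
  | succ j ih =>
    have hu2 : u / 2 < 2 ^ j := by rw [pow_succ] at hu; omega
    have hdiv : (m * 2 ^ (j + 1) + u) / 2 = m * 2 ^ j + u / 2 := by
      rw [pow_succ, ← mul_assoc]; omega
    have hmod : (m * 2 ^ (j + 1) + u) % 2 = u % 2 := by
      rw [pow_succ, ← mul_assoc]; omega
    rw [← add_assoc, bitRev_succ, bitRev_succ, hdiv, hmod, ih hu2, pow_add]
    ring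

lemma bitRev_bitRev {c v : ℕ} (hv : v < 2 ^ c) : bitRev c (bitRev c v) = v := by
  induction c generalizing v with
  | zero => simp_all
  | succ c ih =>
    have hv2 : v / 2 < 2 ^ c := by rw [pow_succ] at hv; omega
    rw [bitRev_succ c v, add_comm c 1, bitRev_add_mul_pow _ (bitRev_lt c _), ih hv2, bitRev_one]
    omega

lemma exists_le_mul_add_le {d α β : ℕ} (hd : 0 < d) (h : 2 * d ≤ β - α) :
    ∃ m, α ≤ m * d ∧ m * d + d ≤ β := by
  have hlo := Nat.lt_div_mul_add (a := α) hd
  have hhi := Nat.div_mul_le_self α d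
  exact ⟨α / d + 1, by rw [add_one_mul]; omega, by rw [add_one_mul]; omega⟩

lemma exists_le_lt_add_modEq {n : ℕ} (hn : 0 < n) (γ r : ℕ) :
    ∃ y, γ ≤ y ∧ y < γ + n ∧ y ≡ r [MOD n] := by
  have : NeZero n := ⟨hn.ne'⟩
  refine ⟨γ + ((r - γ : ZMod n)).val, by omega, by simpa using ZMod.val_lt _, ?_⟩
  rw [← ZMod.natCast_eq_natCast_iff]
  push_cast
  rw [ZMod.natCast_zmod_val]
  ring

lemma exists_lt_add_mul_mod_eq {a b s y : ℕ} (hy : y < a * b) (h : s ≡ y [MOD a]) :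
    ∃ v < b, (s + a * v) % (a * b) = y := by
  have hb : 0 < b := Nat.pos_of_ne_zero (by rintro rfl; simp at hy)
  obtain ⟨z, hz⟩ := Nat.modEq_iff_dvd.mp h
  have hzb : 0 ≤ z % b := Int.emod_nonneg _ (by omega)
  have hzb' : z % b < b := Int.emod_lt_of_pos _ (by omega)
  refine ⟨(z % b).toNat, by omega, ?_⟩
  have hrepr : (s : ℤ) + a * (z % b) = y + a * b * -(z / b) := by
    rw [Int.emod_def]
    linarith
  zify
  rw [Int.toNat_of_nonneg hzb, hrepr, Int.add_mul_emod_self_left,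
    Int.emod_eq_of_lt (by omega) (by exact_mod_cast hy)]

lemma exists_scales_of_four_mul_pow_le_mul {c A B : ℕ} (hA : A ≤ 2 ^ c) (hB : B ≤ 2 ^ c)
    (h : 4 * 2 ^ c ≤ A * B) : ∃ j k, k + j = c ∧ 2 * 2 ^ j ≤ A ∧ 2 ^ k ≤ B := by
  have hA2 : 2 ≤ A := by nlinarith [Nat.two_pow_pos c]
  set L := Nat.log 2 A
  have hL1 : 2 ^ L ≤ A := Nat.pow_log_le_self 2 (by omega)
  have hL2 : A < 2 ^ (L + 1) := Nat.lt_pow_succ_log_self (by norm_num) A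
  have hL0 : 0 < L := Nat.log_pos (by norm_num) hA2
  have hLc : L ≤ c := (Nat.pow_le_pow_iff_right (by norm_num)).mp (hL1.trans hA)
  refine ⟨L - 1, c + 1 - L, by omega, by rwa [← pow_succ', Nat.sub_add_cancel hL0], ?_⟩
  refine (Nat.lt_of_mul_lt_mul_left (a := 2 ^ (L + 1)) ?_).le
  calc 2 ^ (L + 1) * 2 ^ (c + 1 - L) = 4 * 2 ^ c := by
        rw [← pow_add, show L + 1 + (c + 1 - L) = c + 2 by omega, pow_add]; ring
    _ ≤ A * B := h
    _ < 2 ^ (L + 1) * B := Nat.mul_lt_mul_of_pos_right hL2 (by nlinarith [Nat.two_pow_pos c])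

lemma exists_bitRev_add_mod_eq {k j m i y : ℕ} (hy : y < 2 ^ (k + j))
    (h : bitRev k m + i ≡ y [MOD 2 ^ k]) :
    ∃ u < 2 ^ j, (bitRev (k + j) (m * 2 ^ j + u) + i) % 2 ^ (k + j) = y := by
  rw [pow_add] at hy ⊢
  obtain ⟨v, hv, hvy⟩ := exists_lt_add_mul_mod_eq hy h
  refine ⟨bitRev j v, bitRev_lt j v, ?_⟩
  rw [bitRev_add_mul_pow m (bitRev_lt j v), bitRev_bitRev hv, ← hvy, add_right_comm]

theorem shifted_vdc_empty_rectangle_area_general (c i α β γ η : ℕ)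
    (hβ : β ≤ 2 ^ c) (hη : η ≤ 2 ^ c)
    (hempty : ∀ q, q < 2 ^ c →
      ¬(α ≤ q ∧ q < β ∧ γ ≤ (bitRev c q + i) % 2 ^ c ∧ (bitRev c q + i) % 2 ^ c < η)) :
    (β - α) * (η - γ) < 4 * 2 ^ c := by
  by_contra! hlarge
  obtain ⟨j, k, rfl, hjA, hkB⟩ := exists_scales_of_four_mul_pow_le_mul (by omega) (by omega) hlarge
  obtain ⟨m, hαm, hmβ⟩ := exists_le_mul_add_le (Nat.two_pow_pos j) hjA
  obtain ⟨y, hγy, hyk, hy⟩ := exists_le_lt_add_modEq (Nat.two_pow_pos k) γ (bitRev k m + i)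
  obtain ⟨u, hu, hqy⟩ := exists_bitRev_add_mod_eq (j := j) (by omega) hy.symm
  exact hempty (m * 2 ^ j + u) (by omega) ⟨by omega, by omega, hqy ▸ hγy, hqy ▸ by omega⟩

/-- Any axis-parallel integer rectangle in `[0,w]×[0,w]` (with `w = 2^c`) containing no
point of the shifted Van der Corput set `C_w^i = {(q, (f_w(q)+i) mod w)}` has area `< 4w`. -/
theorem shifted_vdc_empty_rectangle_area (c i α β γ η : ℕ) (hc : 0 < c) (hi : i < 2 ^ c)
    (hβ : β ≤ 2 ^ c) (hη : η ≤ 2 ^ c)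
    (hempty : ∀ q, q < 2 ^ c →
      ¬(α ≤ q ∧ q < β ∧ γ ≤ (bitRev c q + i) % 2 ^ c ∧ (bitRev c q + i) % 2 ^ c < η)) :
    (β - α) * (η - γ) < 4 * 2 ^ c :=
  shifted_vdc_empty_rectangle_area_general c i α β γ η hβ hη hempty
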